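/- Let R be an n×n real matrix whose symmetric part (R + Rᵀ)/2 is positive definite. Then for every v ∈ ℝⁿ, vᵀ R⁻¹ v ≤ vᵀ ((R + Rᵀ)/2)⁻¹ v. -/

import Mathlib

/-!
Let `S` be the symmetric part of `R`; it has the same quadratic form as `R`, so it is positive
definite and `R` is invertible. With `x = R⁻¹ v` and `y = S⁻¹ v`, symmetry of `S` and
`xᵀ S x = xᵀ R x = xᵀ v` give `(y - x)ᵀ S (y - x) = vᵀ y - vᵀ x`, which is nonnegative.
-/

open Matrix

namespace Matrix

variable {n : Type*}

noncomputable def symmPart (A : Matrix n n ℝ) : Matrix n n ℝ := (2 : ℝ)⁻¹ • (A + Aᵀ)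

theorem isSymm_symmPart (A : Matrix n n ℝ) : A.symmPart.IsSymm := by
  simp [IsSymm, symmPart, add_comm]

variable [Fintype n]

theorem dotProduct_symmPart_mulVec_self (A : Matrix n n ℝ) (x : n → ℝ) :
    x ⬝ᵥ (A.symmPart *ᵥ x) = x ⬝ᵥ (A *ᵥ x) := by
  rw [symmPart, smul_mulVec, add_mulVec, dotProduct_smul, dotProduct_add,
    dotProduct_transpose_mulVec A x x, smul_eq_mul]
  ring

theorem posDef_symmPart {A : Matrix n n ℝ} (hA : ∀ x : n → ℝ, x ≠ 0 → 0 < x ⬝ᵥ (A *ᵥ x)) :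
    A.symmPart.PosDef :=
  .of_dotProduct_mulVec_pos (isHermitian_iff_isSymm.mpr A.isSymm_symmPart) fun x hx => by
    simpa [dotProduct_symmPart_mulVec_self] using hA x hx

theorem isUnit_of_dotProduct_mulVec_pos [DecidableEq n] {K : Type*} [Field K] [LinearOrder K]
    [IsStrictOrderedRing K] {A : Matrix n n K} (hA : ∀ x : n → K, x ≠ 0 → 0 < x ⬝ᵥ (A *ᵥ x)) :
    IsUnit A := by
  refine mulVec_injective_iff_isUnit.mp ((injective_iff_map_eq_zero A.mulVecLin).mpr ?_)
  intro x hAx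
  by_contra hx
  rw [mulVecLin_apply] at hAx
  simpa [hAx] using hA x hx

theorem dotProduct_inv_mulVec_le_of_posDef [DecidableEq n] {R S : Matrix n n ℝ}
    (hS : S.PosDef) (hR : IsUnit R) (hRS : ∀ x : n → ℝ, x ⬝ᵥ (S *ᵥ x) = x ⬝ᵥ (R *ᵥ x))
    (v : n → ℝ) : v ⬝ᵥ (R⁻¹ *ᵥ v) ≤ v ⬝ᵥ (S⁻¹ *ᵥ v) := by
  set x := R⁻¹ *ᵥ v
  set y := S⁻¹ *ᵥ v
  have hRx : R *ᵥ x = v := by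
    rw [mulVec_mulVec, mul_nonsing_inv R ((isUnit_iff_isUnit_det R).mp hR), one_mulVec]
  have hSy : S *ᵥ y = v := by
    rw [mulVec_mulVec, mul_nonsing_inv S ((isUnit_iff_isUnit_det S).mp hS.isUnit), one_mulVec]
  have hSsymm : Sᵀ = S := isHermitian_iff_isSymm.mp hS.isHermitian
  have hyS (z : n → ℝ) : y ⬝ᵥ (S *ᵥ z) = v ⬝ᵥ z := by
    rw [← dotProduct_transpose_mulVec, hSsymm, hSy, dotProduct_comm]
  have hexpand : (y - x) ⬝ᵥ (S *ᵥ (y - x)) = v ⬝ᵥ y - v ⬝ᵥ x := by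
    rw [mulVec_sub, sub_dotProduct, dotProduct_sub, dotProduct_sub, hyS, hyS, hRS, hRx, hSy,
      dotProduct_comm x v]
    ring
  have hnonneg := hS.posSemidef.dotProduct_mulVec_nonneg (y - x)
  rw [star_trivial, hexpand] at hnonneg
  linarith

end Matrix

/-- `P₀ ≤ P₁`: for `R` with positive definite symmetric part,
`vᵀR⁻¹v ≤ vᵀ((R + Rᵀ)/2)⁻¹v` for every `v`. -/
theorem quadratic_form_inverse_le_symmetrized
    (n : ℕ) (R : Matrix (Fin n) (Fin n) ℝ)
    (hR : ∀ x : Fin n → ℝ, x ≠ 0 → 0 < x ⬝ᵥ (R *ᵥ x)) :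
    ∀ v : Fin n → ℝ, v ⬝ᵥ (R⁻¹ *ᵥ v) ≤ v ⬝ᵥ (((2:ℝ)⁻¹ • (R + Rᵀ))⁻¹ *ᵥ v) :=
  dotProduct_inv_mulVec_le_of_posDef (posDef_symmPart hR) (isUnit_of_dotProduct_mulVec_pos hR)
    R.dotProduct_symmPart_mulVec_self
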